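/- Let a time-dependent graph on a vertex set V have nonnegative weights all satisfying the FIFO property, let v ∈ V, and define on V' = V \ {v} the reduced weights w' a b (t) = min( w a b t, w a v t + w v b (t + w a v t) ). Then: (i) each reduced weight w' a b is nonnegative and satisfies the FIFO property; and (ii) for all s, d ∈ V' and every departure time t, the infimum of travel costs over walks from s to d all of whose vertices lie in V', computed with the weights w', equals the infimum of travel costs over all walks from s to d in V computed with the weights w. (Correctness of the vertex-reduction operator: G ⊖ v is a travel-cost-function-preserving graph.) -/

import Mathlib

/-- The travel cost of a walk (a nonempty list of vertices) when departing at time `t`: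
`cost([x], t) = 0` and `cost(x :: y :: rest, t) = w x y t + cost(y :: rest, t + w x y t)`. -/
def tdCost {V : Type*} (w : V → V → ℝ → ℝ) : List V → ℝ → ℝ
  | [], _ => 0
  | [_], _ => 0
  | x :: y :: rest, t => w x y t + tdCost w (y :: rest) (t + w x y t)

/-- `p` is a walk from `s` to `d`: a nonempty finite sequence of vertices
starting at `s` and ending at `d`. -/
def IsTDWalk {V : Type*} (p : List V) (s d : V) : Prop :=
  p ≠ [] ∧ p.head? = some s ∧ p.getLast? = some d

/-- The shortest travel cost function:
`f s d t = inf { cost(p, t) : p a walk from s to d }`. -/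
noncomputable def tdShortest {V : Type*} (w : V → V → ℝ → ℝ) (s d : V) (t : ℝ) : ℝ :=
  sInf {c | ∃ p : List V, IsTDWalk p s d ∧ tdCost w p t = c}

/-- The reduced weights on `V' = V \ {v}` obtained by eliminating the vertex `v`:
`w' a b t = min (w a b t) (w a v t + w v b (t + w a v t))`. -/
noncomputable def tdReduce {V : Type*} (w : V → V → ℝ → ℝ) (v : V) :
    {x : V // x ≠ v} → {x : V // x ≠ v} → ℝ → ℝ :=
  fun a b t => min (w (a : V) (b : V) t) (w (a : V) v t + w v (b : V) (t + w (a : V) v t))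

/- ================= auxiliary lemmas ================= -/

lemma tdCost_cons' {V : Type*} (w : V → V → ℝ → ℝ) (a b : V) (p : List V)
    (h : p.head? = some b) (t : ℝ) :
    tdCost w (a :: p) t = w a b t + tdCost w p (t + w a b t) := by
  cases p with
  | nil => simp at h
  | cons c rest => simp only [List.head?_cons, Option.some.injEq] at h; subst h; rfl

lemma getLast?_cons_ne_nil' {V : Type*} (a : V) {l : List V} (h : l ≠ []) :
    (a :: l).getLast? = l.getLast? := by
  cases l with
  | nil => exact absurd rfl h
  | cons b l' => exact List.getLast?_cons_cons

lemma tdCost_nonneg' {V : Type*} (w : V → V → ℝ → ℝ) (hnn : ∀ a b t, 0 ≤ w a b t) :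
    ∀ (p : List V) (t : ℝ), 0 ≤ tdCost w p t
  | [], _ => le_refl 0
  | [_], _ => le_refl 0
  | x :: y :: rest, t =>
      add_nonneg (hnn x y t) (tdCost_nonneg' w hnn (y :: rest) (t + w x y t))

lemma tdCost_arrival_mono' {V : Type*} (w : V → V → ℝ → ℝ)
    (hfifo : ∀ a b, Monotone fun t => t + w a b t) :
    ∀ p : List V, Monotone fun t => t + tdCost w p t
  | [] => by intro a b h; simpa [tdCost] using h
  | [x] => by intro a b h; simpa [tdCost] using h
  | x :: y :: rest => by
    have ih := (tdCost_arrival_mono' w hfifo (y :: rest)).comp (hfifo x y)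
    intro a b hab
    have h := ih hab
    simp only [Function.comp_apply] at h
    simp only [tdCost]
    linarith

lemma tdReduce_nonneg' {V : Type*} (w : V → V → ℝ → ℝ) (hnn : ∀ a b t, 0 ≤ w a b t)
    (v : V) (a b : {x : V // x ≠ v}) (t : ℝ) : 0 ≤ tdReduce w v a b t :=
  le_min (hnn _ _ _) (add_nonneg (hnn _ _ _) (hnn _ _ _))

lemma tdReduce_fifo' {V : Type*} (w : V → V → ℝ → ℝ)
    (hfifo : ∀ a b, Monotone fun t => t + w a b t) (v : V) (a b : {x : V // x ≠ v}) :
    Monotone fun t => t + tdReduce w v a b t := by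
  intro x y hxy
  have h1 : x + w a.val b.val x ≤ y + w a.val b.val y := hfifo a.val b.val hxy
  have h2 : (x + w a.val v x) + w v b.val (x + w a.val v x)
      ≤ (y + w a.val v y) + w v b.val (y + w a.val v y) :=
    ((hfifo v b.val).comp (hfifo a.val v)) hxy
  simp only [tdReduce]
  have m1 := min_le_left (w a.val b.val x) (w a.val v x + w v b.val (x + w a.val v x))
  have m2 := min_le_right (w a.val b.val x) (w a.val v x + w v b.val (x + w a.val v x))
  rcases le_total (w a.val b.val y) (w a.val v y + w v b.val (y + w a.val v y)) with h | h
  · rw [min_eq_left h]; linarith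
  · rw [min_eq_right h]; linarith

/-- Contraction direction: any walk in `V` can be converted to a walk avoiding `v`
with no larger reduced cost. -/
lemma tdReduce_forward' {V : Type*} (w : V → V → ℝ → ℝ)
    (hnn : ∀ a b t, 0 ≤ w a b t)
    (hfifo : ∀ a b, Monotone fun t => t + w a b t) (v : V) :
    ∀ (n : ℕ) (q : List V), q.length ≤ n →
      ∀ (s d : {x : V // x ≠ v}), q.head? = some s.val → q.getLast? = some d.val →
      ∀ t : ℝ, ∃ p : List {x : V // x ≠ v},
        IsTDWalk p s d ∧ tdCost (tdReduce w v) p t ≤ tdCost w q t := by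
  have harr := tdCost_arrival_mono' (tdReduce w v) (tdReduce_fifo' w hfifo v)
  have harrw := tdCost_arrival_mono' w hfifo
  intro n
  induction n with
  | zero =>
    intro q hq s d hh _ t
    cases q with
    | nil => simp at hh
    | cons x q' => simp only [List.length_cons] at hq; omega
  | succ n ih =>
    intro q hq s d hh hl t
    cases q with
    | nil => simp at hh
    | cons x q' =>
      simp only [List.head?_cons, Option.some.injEq] at hh
      subst hh
      cases q' with
      | nil =>
        simp only [List.getLast?_singleton, Option.some.injEq] at hl
        have hsd : s = d := Subtype.ext hl
        subst hsd
        exact ⟨[s], ⟨by simp, by simp, by simp⟩, by simp [tdCost]⟩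
      | cons y rest =>
        rw [List.getLast?_cons_cons] at hl
        by_cases hyv : y = v
        · rw [hyv] at hl ⊢
          cases rest with
          | nil =>
            simp only [List.getLast?_singleton, Option.some.injEq] at hl
            exact absurd hl.symm d.prop
          | cons z rest' =>
            rw [List.getLast?_cons_cons] at hl
            by_cases hzv : z = v
            · rw [hzv] at hl ⊢
              -- q = s :: v :: v :: rest' ; shorten to s :: v :: rest'
              have hlen : (↑s :: v :: rest').length ≤ n := by
                simp only [List.length_cons] at hq ⊢; omega
              have hl' : (↑s :: v :: rest').getLast? = some d.val := by
                rw [List.getLast?_cons_cons]; exact hl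
              obtain ⟨p, hp, hc⟩ := ih (↑s :: v :: rest') hlen s d (by simp) hl' t
              refine ⟨p, hp, hc.trans ?_⟩
              have key : t + w (↑s) v t ≤ (t + w (↑s) v t) + w v v (t + w (↑s) v t) :=
                le_add_of_nonneg_right (hnn _ _ _)
              have hm := harrw (v :: rest') key
              simp only at hm
              simp only [tdCost]
              linarith
            · -- q = s :: v :: z :: rest' with z ≠ v : contract first two edges
              have hlen : (z :: rest').length ≤ n := by
                simp only [List.length_cons] at hq ⊢; omega
              obtain ⟨p, hp, hc⟩ := ih (z :: rest') hlen ⟨z, hzv⟩ d rfl hl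
                ((t + w (↑s) v t) + w v z (t + w (↑s) v t))
              refine ⟨s :: p, ⟨by simp, by simp, by
                rw [getLast?_cons_ne_nil' _ hp.1]; exact hp.2.2⟩, ?_⟩
              rw [tdCost_cons' (tdReduce w v) s ⟨z, hzv⟩ p hp.2.1 t]
              have hwle : tdReduce w v s ⟨z, hzv⟩ t
                  ≤ w (↑s) v t + w v z (t + w (↑s) v t) := min_le_right _ _
              have hmono := harr p (show t + tdReduce w v s ⟨z, hzv⟩ t
                  ≤ (t + w (↑s) v t) + w v z (t + w (↑s) v t) by linarith)
              simp only at hmono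
              simp only [tdCost]
              linarith
        · -- y ≠ v : keep the first edge
          have hlen : (y :: rest).length ≤ n := by
            simp only [List.length_cons] at hq ⊢; omega
          obtain ⟨p, hp, hc⟩ := ih (y :: rest) hlen ⟨y, hyv⟩ d rfl hl (t + w (↑s) y t)
          refine ⟨s :: p, ⟨by simp, by simp, by
            rw [getLast?_cons_ne_nil' _ hp.1]; exact hp.2.2⟩, ?_⟩
          rw [tdCost_cons' (tdReduce w v) s ⟨y, hyv⟩ p hp.2.1 t]
          have hwle : tdReduce w v s ⟨y, hyv⟩ t ≤ w (↑s) y t := min_le_left _ _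
          have hmono := harr p (show t + tdReduce w v s ⟨y, hyv⟩ t
              ≤ t + w (↑s) y t by linarith)
          simp only at hmono
          simp only [tdCost]
          linarith

/-- Expansion direction: any walk avoiding `v` with reduced weights corresponds to a
walk in `V` with exactly the same cost. -/
lemma tdReduce_backward' {V : Type*} (w : V → V → ℝ → ℝ) (v : V) :
    ∀ (p : List {x : V // x ≠ v}) (s d : {x : V // x ≠ v}), IsTDWalk p s d →
      ∀ t : ℝ, ∃ q : List V, IsTDWalk q s.val d.val ∧ tdCost w q t = tdCost (tdReduce w v) p t
  | [], s, d, hp, t => absurd rfl hp.1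
  | [a], s, d, hp, t => by
    obtain ⟨-, hh, hl⟩ := hp
    simp only [List.head?_cons, Option.some.injEq] at hh
    simp only [List.getLast?_singleton, Option.some.injEq] at hl
    subst hh
    subst hl
    exact ⟨[a.val], ⟨by simp, by simp, by simp⟩, by simp [tdCost]⟩
  | a :: b :: rest, s, d, hp, t => by
    obtain ⟨-, hh, hl⟩ := hp
    simp only [List.head?_cons, Option.some.injEq] at hh
    subst hh
    rw [List.getLast?_cons_cons] at hl
    have hwalk : IsTDWalk (b :: rest) b d := ⟨by simp, by simp, hl⟩
    obtain ⟨q, hq, he⟩ := tdReduce_backward' w v (b :: rest) b d hwalk (t + tdReduce w v a b t)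
    have hcost : tdCost (tdReduce w v) (a :: b :: rest) t
        = tdReduce w v a b t + tdCost (tdReduce w v) (b :: rest) (t + tdReduce w v a b t) := rfl
    rcases min_cases (w (↑a) (↑b) t) (w (↑a) v t + w v (↑b) (t + w (↑a) v t)) with
      ⟨hmin, -⟩ | ⟨hmin, -⟩
    · have hr : tdReduce w v a b t = w (↑a) (↑b) t := hmin
      refine ⟨a.val :: q, ⟨by simp, by simp, by
        rw [getLast?_cons_ne_nil' _ hq.1]; exact hq.2.2⟩, ?_⟩
      rw [tdCost_cons' w a.val b.val q hq.2.1 t]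
      rw [hr] at he
      rw [hcost, hr, he]
    · have hr : tdReduce w v a b t = w (↑a) v t + w v (↑b) (t + w (↑a) v t) := hmin
      refine ⟨a.val :: v :: q, ⟨by simp, by simp, by
        rw [List.getLast?_cons_cons, getLast?_cons_ne_nil' _ hq.1]; exact hq.2.2⟩, ?_⟩
      have hstep : tdCost w (a.val :: v :: q) t
          = w (↑a) v t + (w v (↑b) (t + w (↑a) v t)
            + tdCost w q ((t + w (↑a) v t) + w v (↑b) (t + w (↑a) v t))) := by
        show w (↑a) v t + tdCost w (v :: q) (t + w (↑a) v t) = _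
        rw [tdCost_cons' w v b.val q hq.2.1]
      have harg : (t + w (↑a) v t) + w v (↑b) (t + w (↑a) v t)
          = t + (w (↑a) v t + w v (↑b) (t + w (↑a) v t)) := by ring
      rw [hr] at he
      rw [hstep, harg, he, hcost, hr]
      ring

/-- **Correctness of the vertex-reduction operator `G ⊖ v`.**
(i) Each reduced weight is nonnegative and FIFO; (ii) for all `s, d ∈ V' = V \ {v}` and
every departure time `t`, the infimum of travel costs over walks from `s` to `d` inside `V'`
computed with the reduced weights equals the infimum over all walks in `V` with the
original weights. -/
theorem tdReduce_preserves_shortest {V : Type*} (w : V → V → ℝ → ℝ)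
    (hnn : ∀ a b t, 0 ≤ w a b t)
    (hfifo : ∀ a b, Monotone fun t => t + w a b t) (v : V) :
    (∀ a b : {x : V // x ≠ v},
        (∀ t, 0 ≤ tdReduce w v a b t) ∧ Monotone fun t => t + tdReduce w v a b t) ∧
    (∀ (s d : {x : V // x ≠ v}) (t : ℝ),
        sInf {c | ∃ p : List {x : V // x ≠ v}, IsTDWalk p s d ∧ tdCost (tdReduce w v) p t = c} =
        sInf {c | ∃ p : List V, IsTDWalk p (s : V) (d : V) ∧ tdCost w p t = c}) := by
  constructor
  · exact fun a b => ⟨tdReduce_nonneg' w hnn v a b, tdReduce_fifo' w hfifo v a b⟩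
  · intro s d t
    have hnn' : ∀ (a b : {x : V // x ≠ v}) t, 0 ≤ tdReduce w v a b t :=
      fun a b t => tdReduce_nonneg' w hnn v a b t
    have hbddS : BddBelow {c | ∃ p : List V, IsTDWalk p (s : V) (d : V) ∧ tdCost w p t = c} :=
      ⟨0, by rintro c ⟨p, -, rfl⟩; exact tdCost_nonneg' w hnn p t⟩
    have hbddS' : BddBelow {c | ∃ p : List {x : V // x ≠ v},
        IsTDWalk p s d ∧ tdCost (tdReduce w v) p t = c} :=
      ⟨0, by rintro c ⟨p, -, rfl⟩; exact tdCost_nonneg' _ hnn' p t⟩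
    have hneS : Set.Nonempty {c | ∃ p : List V, IsTDWalk p (s : V) (d : V) ∧ tdCost w p t = c} :=
      ⟨tdCost w [s.val, d.val] t, [s.val, d.val], ⟨by simp, by simp, by simp⟩, rfl⟩
    have hneS' : Set.Nonempty {c | ∃ p : List {x : V // x ≠ v},
        IsTDWalk p s d ∧ tdCost (tdReduce w v) p t = c} :=
      ⟨tdCost (tdReduce w v) [s, d] t, [s, d], ⟨by simp, by simp, by simp⟩, rfl⟩
    apply le_antisymm
    · refine le_csInf hneS ?_
      rintro c ⟨q, hq, rfl⟩
      obtain ⟨p, hp, hle⟩ :=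
        tdReduce_forward' w hnn hfifo v q.length q le_rfl s d hq.2.1 hq.2.2 t
      exact le_trans (csInf_le hbddS' ⟨p, hp, rfl⟩) hle
    · refine csInf_le_csInf hbddS hneS' ?_
      rintro c ⟨p, hp, rfl⟩
      obtain ⟨q, hq, he⟩ := tdReduce_backward' w v p s d hp t
      exact ⟨q, hq, he⟩
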